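/- Define A_k(n; d_1,…,d_r) := k^n · Σ_{j=0}^{r} (-1)^{r-j} Σ_{1 ≤ k_1 < ⋯ < k_j ≤ r} C(c_1/k - 1 + d_{k_1} + ⋯ + d_{k_j}, n+r), where c_1 = n + r + 1 - Σ d_i, k ≥ 2, and k divides c_1. Then A_k(n; d_1,…,d_r) = k^n · Σ_{l=0}^{n} C(c_1/k, n-l) · (-1)^l · Td(l; d_1,…,d_r), where Td(l; d) = Σ_{j=0}^{r} (-1)^{l+r+j} Σ_{1 ≤ k_1 < ⋯ < k_j ≤ r} C(-1 + d_{k_1}+⋯+d_{k_j}, l+r). -/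

import Mathlib

open Finset

/-- Generalized binomial coefficient `C(a, k) = a(a-1)⋯(a-k+1)/k!`. -/
def gbc (a : ℚ) (k : ℕ) : ℚ :=
  (∏ i ∈ Finset.range k, (a - i)) / (Nat.factorial k)


/-- Todd genus of the complete intersection `X_n(d₁,…,d_r)` via the combinatorial formula. -/
def Td (n r : ℕ) (d : Fin r → ℤ) : ℚ :=
  ∑ S ∈ (Finset.univ : Finset (Fin r)).powerset,
    (-1) ^ (n + r + S.card) * gbc (-1 + ∑ i ∈ S, (d i : ℚ)) (n + r)


/-- The `A_k`-genus of the complete intersection `X_n(d₁,…,d_r)` via the combinatorial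
formula, where `c₁ = n + r + 1 - ∑ dᵢ`. -/
def Ak (n r k : ℕ) (d : Fin r → ℤ) : ℚ :=
  (k : ℚ) ^ n * ∑ S ∈ (Finset.univ : Finset (Fin r)).powerset,
    (-1) ^ (r - S.card) *
      gbc (((n : ℚ) + r + 1 - ∑ i, (d i : ℚ)) / k - 1 + ∑ i ∈ S, (d i : ℚ)) (n + r)

/-!
Write `c = c₁/k` and `d_S = Σ_{i ∈ S} dᵢ`. Chu–Vandermonde splits
`C(c - 1 + d_S, n + r) = Σ_j C(c, n + r - j) · C(-1 + d_S, j)`. For fixed `j`, the alternating sum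
over `S ⊆ {1,…,r}` of `C(-1 + d_S, j)` is an `r`-fold mixed finite difference of a polynomial of
degree `j`, so it vanishes for `j < r`; writing the surviving indices as `j = l + r` gives the
Todd genera `Td(l; d)`.
-/

open Polynomial

lemma gbc_eq_eval_descPochhammer (a : ℚ) (k : ℕ) :
    gbc a k = (descPochhammer ℚ k).eval a / k.factorial := by
  rw [gbc, descPochhammer_eval_eq_prod_range]

lemma gbc_eq_choose (a : ℚ) (k : ℕ) : gbc a k = Ring.choose a k := by
  rw [Ring.choose_eq_smul, gbc_eq_eval_descPochhammer, smul_eq_mul, ← aeval_eq_smeval,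
    aeval_def, ← eval_map, descPochhammer_map, div_eq_inv_mul]

lemma gbc_add (x y : ℚ) (m : ℕ) :
    gbc (x + y) m = ∑ i ∈ range (m + 1), gbc x (m - i) * gbc y i := by
  simp only [gbc_eq_choose]
  rw [add_comm, Ring.add_choose_eq m (Commute.all y x),
    Finset.Nat.sum_antidiagonal_eq_sum_range_succ_mk]
  exact sum_congr rfl fun i _ => mul_comm _ _

lemma Polynomial.degree_sub_taylor_lt {R : Type*} [Ring R] {f : R[X]} (hf : f ≠ 0) (r : R) :
    (f - taylor r f).degree < f.degree :=
  degree_sub_lt_left (degree_taylor f r).symm hf (leadingCoeff_taylor r f).symm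

lemma Polynomial.sum_powerset_neg_one_pow_card_mul_eval_eq_zero {R ι : Type*} [CommRing R]
    (s : Finset ι) (e : ι → R) {f : R[X]} (hf : f.degree < #s) :
    ∑ S ∈ s.powerset, (-1) ^ #S * f.eval (∑ i ∈ S, e i) = 0 := by
  classical
  induction s using Finset.induction generalizing f with
  | empty =>
    rw [card_empty, Nat.cast_zero, Nat.WithBot.lt_zero_iff, degree_eq_bot] at hf
    simp [hf]
  | @insert a s ha ih =>
    have hg : (f - taylor (e a) f).degree < #s := by
      rcases eq_or_ne f 0 with rfl | hf0
      · simp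
      · rw [card_insert_of_notMem ha] at hf
        exact (degree_sub_taylor_lt hf0 _).trans_le (Order.le_of_lt_succ hf)
    rw [sum_powerset_insert ha, ← ih hg, ← sum_add_distrib]
    refine sum_congr rfl fun S hS => ?_
    have haS : a ∉ S := fun h => ha (mem_powerset.mp hS h)
    rw [card_insert_of_notMem haS, sum_insert haS, eval_sub, taylor_eval, add_comm (e a)]
    ring

def gbcAltSum {ι : Type*} (s : Finset ι) (e : ι → ℚ) (b : ℚ) (m : ℕ) : ℚ :=
  ∑ S ∈ s.powerset, (-1) ^ #S * gbc (b + ∑ i ∈ S, e i) m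

lemma gbcAltSum_eq_zero_of_lt {ι : Type*} (s : Finset ι) (e : ι → ℚ) (b : ℚ) {t : ℕ}
    (ht : t < #s) : gbcAltSum s e b t = 0 := by
  set P : ℚ[X] := C (t.factorial : ℚ)⁻¹ * taylor b (descPochhammer ℚ t)
  have hP : P.degree < #s := by
    refine degree_le_natDegree.trans_lt (WithBot.coe_lt_coe.mpr ?_)
    calc P.natDegree ≤ (taylor b (descPochhammer ℚ t)).natDegree := natDegree_C_mul_le _ _
      _ < #s := by rwa [natDegree_taylor, descPochhammer_natDegree]
  rw [gbcAltSum, ← sum_powerset_neg_one_pow_card_mul_eval_eq_zero s e hP]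
  refine sum_congr rfl fun S _ => ?_
  rw [gbc_eq_eval_descPochhammer, eval_mul, eval_C, taylor_eval, add_comm b, div_eq_inv_mul]

lemma gbcAltSum_add {ι : Type*} (s : Finset ι) (e : ι → ℚ) (c b : ℚ) (n : ℕ) :
    gbcAltSum s e (c + b) (n + #s) =
      ∑ l ∈ range (n + 1), gbc c (n - l) * gbcAltSum s e b (l + #s) := by
  have hsplit : n + #s + 1 = #s + (n + 1) := by omega
  calc gbcAltSum s e (c + b) (n + #s)
      = ∑ i ∈ range (n + #s + 1), gbc c (n + #s - i) * gbcAltSum s e b i := by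
        simp only [gbcAltSum, add_assoc c, gbc_add c, mul_sum]
        rw [sum_comm]
        exact sum_congr rfl fun i _ => sum_congr rfl fun S _ => mul_left_comm _ _ _
    _ = ∑ l ∈ range (n + 1), gbc c (n - l) * gbcAltSum s e b (l + #s) := by
        rw [hsplit, sum_range_add, sum_eq_zero fun i hi =>
          by rw [gbcAltSum_eq_zero_of_lt s e b (mem_range.mp hi), mul_zero], zero_add]
        refine sum_congr rfl fun l _ => ?_
        rw [add_comm #s l, Nat.add_sub_add_right]

lemma neg_one_pow_sub_of_le {R : Type*} [Ring R] {m n : ℕ} (h : m ≤ n) :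
    (-1 : R) ^ (n - m) = (-1) ^ n * (-1) ^ m := by
  obtain ⟨t, rfl⟩ := Nat.exists_eq_add_of_le h
  rw [Nat.add_sub_cancel_left, ← pow_add, add_right_comm, ← two_mul, pow_add, pow_mul,
    neg_one_sq, one_pow, one_mul]

lemma Ak_eq_gbcAltSum (n r k : ℕ) (d : Fin r → ℤ) :
    Ak n r k d = (k : ℚ) ^ n * ((-1) ^ r * gbcAltSum univ (fun i => (d i : ℚ))
      (((n : ℚ) + r + 1 - ∑ i, (d i : ℚ)) / k + -1) (n + r)) := by
  rw [Ak, gbcAltSum, mul_sum _ _ ((-1 : ℚ) ^ r)]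
  congr 1
  refine sum_congr rfl fun S hS => ?_
  have hS : #S ≤ r := by simpa using card_le_card (mem_powerset.mp hS)
  rw [neg_one_pow_sub_of_le hS, ← sub_eq_add_neg, add_comm _ (∑ i ∈ S, (d i : ℚ)), ← add_sub_assoc]
  ring

lemma Td_eq_gbcAltSum (l r : ℕ) (d : Fin r → ℤ) :
    Td l r d = (-1) ^ (l + r) * gbcAltSum univ (fun i => (d i : ℚ)) (-1) (l + r) := by
  simp only [Td, gbcAltSum, mul_sum, pow_add, mul_assoc]

theorem Ak_eq_todd_sum_general (n r k : ℕ) (d : Fin r → ℤ) :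
    Ak n r k d =
      (k : ℚ) ^ n * ∑ l ∈ Finset.range (n + 1),
        gbc (((n : ℚ) + r + 1 - ∑ i, (d i : ℚ)) / k) (n - l) * (-1) ^ l * Td l r d := by
  have hsign : ∀ l : ℕ, (-1 : ℚ) ^ l * (-1) ^ (l + r) = (-1) ^ r := fun l => by
    rw [← pow_add, ← add_assoc, ← two_mul, pow_add, pow_mul, neg_one_sq, one_pow, one_mul]
  have hexpand := gbcAltSum_add univ (fun i => (d i : ℚ))
    (((n : ℚ) + r + 1 - ∑ i, (d i : ℚ)) / k) (-1) n
  rw [card_univ, Fintype.card_fin] at hexpand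
  rw [Ak_eq_gbcAltSum, hexpand, mul_sum]
  congr 1
  refine sum_congr rfl fun l _ => ?_
  rw [Td_eq_gbcAltSum, mul_assoc _ ((-1) ^ l), ← mul_assoc ((-1) ^ l), hsign]
  ring

theorem Ak_eq_todd_sum (n r k : ℕ) (hr : 1 ≤ r) (hk : 2 ≤ k) (d : Fin r → ℤ)
    (hd : ∀ i, 0 < d i) (hdvd : (k : ℤ) ∣ ((n : ℤ) + r + 1 - ∑ i, d i)) :
    Ak n r k d =
      (k : ℚ) ^ n * ∑ l ∈ Finset.range (n + 1),
        gbc (((n : ℚ) + r + 1 - ∑ i, (d i : ℚ)) / k) (n - l) * (-1) ^ l * Td l r d :=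
  Ak_eq_todd_sum_general n r k d
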